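/- For every n ≥ 1 there exists a subgroup H of finite index in the integral symplectic group Sp(2n, ℤ) such that H is torsion-free, i.e. the only element of H of finite order is the identity. -/

import Mathlib

/-!
Reduction modulo 3 has finite image, so its kernel has finite index; the point is that the
kernel is torsion-free (Minkowski). It suffices to rule out elements of prime order `p`.
If `A = 1 + 3N` and `A ^ p = 1`, the computation takes place in the commutative ring `ℤ[N]`:
writing `y = 3 ^ t M` with `t ≥ 1`, the relation `(1 + y) ^ p = 1` forces `3 ∣ M`. For `p ≠ 3`
the linear term `p y` is the only one not divisible by `3 ^ (2t)`; for `p = 3` the relation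
reads `3y + 3y² + y³ = 0`. Hence `N` is divisible by every power of `3`, so `N = 0`.
-/

open Matrix

/-- The integral symplectic group `Sp(2n, ℤ)`: invertible `2n × 2n` integer matrices `A`
(indexed by `Fin n ⊕ Fin n`) satisfying `Aᵀ * J * A = J`, where
`J = [[0, Iₙ], [-Iₙ, 0]]` is the standard skew-symmetric form. -/
def SpZ (n : ℕ) : Subgroup (GL (Fin n ⊕ Fin n) ℤ) where
  carrier := {A | (↑A : Matrix (Fin n ⊕ Fin n) (Fin n ⊕ Fin n) ℤ)ᵀ *
      fromBlocks 0 1 (-1) 0 * (↑A : Matrix (Fin n ⊕ Fin n) (Fin n ⊕ Fin n) ℤ) =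
      fromBlocks 0 1 (-1) 0}
  one_mem' := by simp
  mul_mem' := by
    intro a b ha hb
    simp only [Set.mem_setOf_eq, Units.val_mul, transpose_mul] at *
    calc (↑b : Matrix (Fin n ⊕ Fin n) (Fin n ⊕ Fin n) ℤ)ᵀ * (↑a)ᵀ *
          fromBlocks 0 1 (-1) 0 * (↑a * ↑b)
        = (↑b)ᵀ * ((↑a)ᵀ * fromBlocks 0 1 (-1) 0 * ↑a) * ↑b := by noncomm_ring
      _ = (↑b)ᵀ * fromBlocks 0 1 (-1) 0 * ↑b := by rw [ha]
      _ = fromBlocks 0 1 (-1) 0 := hb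
  inv_mem' := by
    intro a ha
    simp only [Set.mem_setOf_eq] at *
    calc (↑a⁻¹ : Matrix (Fin n ⊕ Fin n) (Fin n ⊕ Fin n) ℤ)ᵀ * fromBlocks 0 1 (-1) 0 * ↑a⁻¹
        = (↑a⁻¹)ᵀ * ((↑a)ᵀ * fromBlocks 0 1 (-1) 0 * ↑a) * ↑a⁻¹ := by rw [ha]
      _ = ((↑a * ↑a⁻¹ : Matrix (Fin n ⊕ Fin n) (Fin n ⊕ Fin n) ℤ))ᵀ * fromBlocks 0 1 (-1) 0 *
          (↑a * ↑a⁻¹) := by rw [transpose_mul]; noncomm_ring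
      _ = fromBlocks 0 1 (-1) 0 := by rw [Units.mul_inv]; simp

section CommRing

variable {R : Type*} [CommRing R]

theorem exists_one_add_pow_eq_one_add_mul_add_sq_mul (y : R) (n : ℕ) :
    ∃ q : R, (1 + y) ^ n = 1 + n * y + y ^ 2 * q := by
  induction n with
  | zero => exact ⟨0, by simp⟩
  | succ n ih =>
    obtain ⟨q, hq⟩ := ih
    exact ⟨n + q * (1 + y), by rw [pow_succ, hq]; push_cast; ring⟩

variable [IsAddTorsionFree R]

theorem eq_zero_of_three_pow_mul_eq_zero {k : ℕ} {z : R} (h : 3 ^ k * z = 0) : z = 0 := by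
  rw [← Nat.cast_ofNat, ← Nat.cast_pow, ← nsmul_eq_mul] at h
  exact (nsmul_eq_zero_iff_right (by positivity)).mp h

theorem exists_eq_three_mul_of_one_add_three_pow_mul_pow_eq_one {x : R} {t p : ℕ} (ht : t ≠ 0)
    (hp : p.Prime) (h : (1 + 3 ^ t * x) ^ p = 1) : ∃ y, x = 3 * y := by
  obtain ⟨s, rfl⟩ := Nat.exists_eq_add_one_of_ne_zero ht
  rcases eq_or_ne p 3 with rfl | hp3
  · have hz : (3 : R) ^ (s + 2) * (x + 3 ^ (s + 1) * x ^ 2 + 3 ^ (2 * s + 1) * x ^ 3) = 0 := by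
      linear_combination h
    exact ⟨-(3 ^ s * x ^ 2 + 3 ^ (2 * s) * x ^ 3),
      by linear_combination eq_zero_of_three_pow_mul_eq_zero hz⟩
  · obtain ⟨q, hq⟩ := exists_one_add_pow_eq_one_add_mul_add_sq_mul (3 ^ (s + 1) * x) p
    have hz : (3 : R) ^ (s + 1) * (p * x + 3 ^ (s + 1) * x ^ 2 * q) = 0 := by
      linear_combination hq.symm.trans h
    obtain ⟨a, b, hab⟩ := (Nat.coprime_primes hp Nat.prime_three |>.mpr hp3).isCoprime
    have hab' : (a : R) * p + b * 3 = 1 := by exact_mod_cast congrArg (Int.cast : ℤ → R) hab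
    exact ⟨b * x - a * 3 ^ s * x ^ 2 * q,
      by linear_combination (a : R) * eq_zero_of_three_pow_mul_eq_zero hz - x * hab'⟩

theorem exists_eq_three_pow_mul_of_one_add_three_mul_pow_eq_one {x : R} {p : ℕ} (hp : p.Prime)
    (h : (1 + 3 * x) ^ p = 1) (t : ℕ) : ∃ y, x = 3 ^ t * y := by
  induction t with
  | zero => exact ⟨x, by simp⟩
  | succ t ih =>
    obtain ⟨y, rfl⟩ := ih
    obtain ⟨z, rfl⟩ := exists_eq_three_mul_of_one_add_three_pow_mul_pow_eq_one t.succ_ne_zero hp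
      (by rwa [← mul_assoc, ← pow_succ'] at h)
    exact ⟨z, by ring⟩

end CommRing

theorem Int.eq_zero_of_forall_pow_dvd {a b : ℤ} (ha : a.natAbs ≠ 1) (h : ∀ t : ℕ, a ^ t ∣ b) :
    b = 0 := by
  by_contra hb
  exact FiniteMultiplicity.not_iff_forall.mpr h (Int.finiteMultiplicity_iff.mpr ⟨ha, hb⟩)

theorem Subgroup.eq_one_of_isOfFinOrder_of_forall_prime {G : Type*} [Group G] {H : Subgroup G}
    (hH : ∀ x ∈ H, ∀ p : ℕ, p.Prime → x ^ p = 1 → x = 1) {x : G} (hx : x ∈ H)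
    (hfin : IsOfFinOrder x) : x = 1 := by
  by_contra hne
  set p := (orderOf x).minFac
  have hp : p.Prime := Nat.minFac_prime (mt orderOf_eq_one_iff.mp hne)
  have hord : orderOf (x ^ (orderOf x / p)) = p :=
    orderOf_pow_orderOf_div hfin.orderOf_pos.ne' (Nat.minFac_dvd _)
  have hone := hH _ (H.pow_mem hx _) p hp (hord ▸ pow_orderOf_eq_one _)
  rw [hone, orderOf_one] at hord
  exact hp.ne_one hord.symm

namespace Matrix

instance {m n α : Type*} [AddMonoid α] [IsAddTorsionFree α] : IsAddTorsionFree (Matrix m n α) :=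
  inferInstanceAs (IsAddTorsionFree (m → n → α))

variable {ι : Type*} [Fintype ι] [DecidableEq ι]

theorem eq_zero_of_forall_eq_three_pow_mul {N : Matrix ι ι ℤ} (h : ∀ t : ℕ, ∃ M, N = 3 ^ t * M) :
    N = 0 := by
  ext i j
  refine Int.eq_zero_of_forall_pow_dvd (a := 3) (by decide) fun t => ?_
  obtain ⟨M, rfl⟩ := h t
  exact ⟨M i j, by simp only [← diagonal_ofNat, diagonal_pow, diagonal_mul, Pi.pow_apply]⟩

open scoped IsMulCommutative in
theorem eq_one_of_pow_prime_eq_one_of_three_dvd_sub_one {A : Matrix ι ι ℤ} {p : ℕ} (hp : p.Prime)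
    (hA : A ^ p = 1) (h3 : ∀ i j, 3 ∣ (A - 1) i j) : A = 1 := by
  obtain ⟨N, rfl⟩ : ∃ N : Matrix ι ι ℤ, A = 1 + 3 * N := by
    choose N hN using h3
    refine ⟨of N, ext fun i j => ?_⟩
    simpa [← diagonal_ofNat, diagonal_mul, sub_eq_iff_eq_add'] using hN i j
  let S := Subring.closure {N}
  have : IsMulCommutative S := Subring.isMulCommutative_closure (by simp)
  have : IsAddTorsionFree S := Subtype.val_injective.isAddTorsionFree S.subtype.toAddMonoidHom
  let x : S := ⟨N, Subring.subset_closure rfl⟩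
  have h3 : ((3 : S) : Matrix ι ι ℤ) = 3 := map_ofNat S.subtype 3
  have hx : (1 + 3 * x) ^ p = 1 := Subtype.ext (by simpa [x, h3] using hA)
  suffices N = 0 by simp [this]
  refine eq_zero_of_forall_eq_three_pow_mul fun t => ?_
  obtain ⟨y, hy⟩ := exists_eq_three_pow_mul_of_one_add_three_mul_pow_eq_one hp hx t
  exact ⟨y, by simpa [x, h3] using congrArg Subtype.val hy⟩

theorem GeneralLinearGroup.eq_one_of_pow_prime_eq_one_of_map_eq_one {A : GL ι ℤ}
    (hA : map (Int.castRingHom (ZMod 3)) A = 1) {p : ℕ} (hp : p.Prime) (hAp : A ^ p = 1) :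
    A = 1 := by
  refine Units.ext <| eq_one_of_pow_prime_eq_one_of_three_dvd_sub_one hp
    (by simpa using congrArg Units.val hAp) fun i j => ?_
  have hij := congrArg (fun B : GL ι (ZMod 3) => (B : Matrix ι ι (ZMod 3)) i j) hA
  simp only [GeneralLinearGroup.map_apply, Int.coe_castRingHom, Units.val_one] at hij
  rw [Matrix.sub_apply]
  refine (ZMod.intCast_eq_intCast_iff_dvd_sub _ _ 3).mp ?_
  rw [hij, one_apply, one_apply]
  split_ifs <;> simp

end Matrix

theorem exists_torsionFree_finiteIndex_subgroup_symplectic_general (n : ℕ) :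
    ∃ H : Subgroup (SpZ n), H.FiniteIndex ∧
      ∀ x ∈ H, ∀ k : ℕ, 1 ≤ k → x ^ k = 1 → x = 1 := by
  let reduction := (GeneralLinearGroup.map (Int.castRingHom (ZMod 3))).comp (SpZ n).subtype
  refine ⟨reduction.ker, Subgroup.finiteIndex_ker reduction, fun x hx k hk hxk => ?_⟩
  refine Subgroup.eq_one_of_isOfFinOrder_of_forall_prime (fun y hy p hp hyp => ?_) hx
    (isOfFinOrder_iff_pow_eq_one.mpr ⟨k, hk, hxk⟩)
  exact Subtype.ext <| GeneralLinearGroup.eq_one_of_pow_prime_eq_one_of_map_eq_one hy hp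
    (by simpa using congrArg Subtype.val hyp)

/-- Borel's theorem for `Sp(2n, ℤ)`, `n ≥ 1`: there is a torsion-free subgroup `H` of
finite index in the integral symplectic group, i.e. the only element of `H` of finite
order is the identity. -/
theorem exists_torsionFree_finiteIndex_subgroup_symplectic (n : ℕ) (hn : 1 ≤ n) :
    ∃ H : Subgroup (SpZ n), H.FiniteIndex ∧
      ∀ x ∈ H, ∀ k : ℕ, 1 ≤ k → x ^ k = 1 → x = 1 :=
  exists_torsionFree_finiteIndex_subgroup_symplectic_general n
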